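/- arXiv:2008.13551 — 4 statements merged into one kernel-verified Lean document; each statement's English description precedes it below -/
import Mathlib

section
/- Let B be a fixed a×b binary matrix of rank b and let C be a uniformly random a×c binary matrix, where 0 ≤ b < a < b+c. Then the probability that the concatenated a×(b+c) matrix A = [B|C] has rank strictly less than a is at most 1/2^(b+c-a). -/
open Matrix Finset
open scoped Classical
open Matrix Finset
open scoped Classical

noncomputable def dotL {a : ℕ} (x : Fin a → ZMod 2) : (Fin a → ZMod 2) →ₗ[ZMod 2] ZMod 2 where
  toFun v := x ⬝ᵥ v
  map_add' u v := by simp [dotProduct_add]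
  map_smul' c v := by simp [dotProduct_smul]

lemma card_dot_zero {a : ℕ} (x : Fin a → ZMod 2) (hx : x ≠ 0) :
    (Finset.univ.filter fun v : Fin a → ZMod 2 => x ⬝ᵥ v = 0).card = 2 ^ (a - 1) := by
  obtain ⟨i, hi⟩ : ∃ i, x i ≠ 0 := by
    by_contra h; push_neg at h; exact hx (funext h)
  have hxi : x i = 1 := by
    have := hi; revert this; generalize x i = u; revert u; decide
  have hsurj : Function.Surjective (dotL x) := by
    intro y
    refine ⟨y • Pi.single i 1, ?_⟩
    simp [dotL, dotProduct_smul, dotProduct_single, hxi]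
  have hrange : LinearMap.range (dotL x) = ⊤ := LinearMap.range_eq_top.mpr hsurj
  have hrk := LinearMap.finrank_range_add_finrank_ker (dotL x)
  rw [hrange, finrank_top, Module.finrank_self, Module.finrank_pi] at hrk
  simp only [Fintype.card_fin] at hrk
  have hker : Module.finrank (ZMod 2) (LinearMap.ker (dotL x)) = a - 1 := by omega
  have hcard : Fintype.card (LinearMap.ker (dotL x)) = 2 ^ (a - 1) := by
    rw [Module.card_eq_pow_finrank (K := ZMod 2), hker, ZMod.card]
  rw [← hcard, ← Fintype.card_subtype]
  exact Fintype.card_congr (Equiv.subtypeEquivRight (fun v => by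
    simp [LinearMap.mem_ker, dotL]))

lemma card_left_ker {a b : ℕ} (B : Matrix (Fin a) (Fin b) (ZMod 2)) (hB : B.rank = b) :
    (Finset.univ.filter fun x : Fin a → ZMod 2 => x ᵥ* B = 0).card = 2 ^ (a - b) := by
  have hrk := LinearMap.finrank_range_add_finrank_ker (Bᵀ.mulVecLin)
  have hrkT : Bᵀ.rank = b := by rw [Matrix.rank_transpose, hB]
  rw [show Module.finrank (ZMod 2) (LinearMap.range Bᵀ.mulVecLin) = Bᵀ.rank from rfl] at hrk
  rw [hrkT, Module.finrank_pi] at hrk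
  simp only [Fintype.card_fin] at hrk
  have hker : Module.finrank (ZMod 2) (LinearMap.ker Bᵀ.mulVecLin) = a - b := by omega
  have hcard : Fintype.card (LinearMap.ker Bᵀ.mulVecLin) = 2 ^ (a - b) := by
    rw [Module.card_eq_pow_finrank (K := ZMod 2), hker, ZMod.card]
  rw [← hcard, ← Fintype.card_subtype]
  exact Fintype.card_congr (Equiv.subtypeEquivRight (fun v => by
    simp [LinearMap.mem_ker, Matrix.mulVecLin_apply, Matrix.mulVec_transpose]))

def transpEquiv (m n α : Type*) : Matrix m n α ≃ Matrix n m α :=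
  ⟨Matrix.transpose, Matrix.transpose, fun M => Matrix.transpose_transpose M,
    fun M => Matrix.transpose_transpose M⟩

lemma card_event {a c : ℕ} (x : Fin a → ZMod 2) (hx : x ≠ 0) :
    (Finset.univ.filter fun C : Matrix (Fin a) (Fin c) (ZMod 2) => x ᵥ* C = 0).card
      = (2 ^ (a - 1)) ^ c := by
  rw [← Fintype.card_subtype]
  have e1 : {C : Matrix (Fin a) (Fin c) (ZMod 2) // x ᵥ* C = 0}
      ≃ {D : Matrix (Fin c) (Fin a) (ZMod 2) // ∀ j, x ⬝ᵥ D j = 0} := by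
    refine (transpEquiv _ _ _).subtypeEquiv fun C => ?_
    constructor
    · intro h j; have := congrFun h j
      simpa [Matrix.vecMul, transpEquiv, Matrix.transpose_apply, dotProduct] using this
    · intro h; funext j; have := h j
      simpa [Matrix.vecMul, transpEquiv, Matrix.transpose_apply, dotProduct] using this
  have e2 : {D : Matrix (Fin c) (Fin a) (ZMod 2) // ∀ j, x ⬝ᵥ D j = 0}
      ≃ ∀ _ : Fin c, {v : Fin a → ZMod 2 // x ⬝ᵥ v = 0} := Equiv.subtypePiEquivPi (β := fun _ : Fin c => Fin a → ZMod 2) (p := fun _ v => x ⬝ᵥ v = 0)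
  rw [Fintype.card_congr (e1.trans e2), Fintype.card_pi]
  simp [Fintype.card_subtype, card_dot_zero x hx]

lemma exists_left_null {a : ℕ} {n : Type*} [Fintype n] (M : Matrix (Fin a) n (ZMod 2))
    (h : M.rank < a) : ∃ x : Fin a → ZMod 2, x ≠ 0 ∧ x ᵥ* M = 0 := by
  have hrk := LinearMap.finrank_range_add_finrank_ker (Mᵀ.mulVecLin)
  have hT : Mᵀ.rank < a := by rwa [Matrix.rank_transpose]
  rw [show Module.finrank (ZMod 2) (LinearMap.range Mᵀ.mulVecLin) = Mᵀ.rank from rfl,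
    Module.finrank_pi] at hrk
  simp only [Fintype.card_fin] at hrk
  have hker : LinearMap.ker Mᵀ.mulVecLin ≠ ⊥ := by
    intro hbot
    rw [hbot, finrank_bot (ZMod 2) (Fin a → ZMod 2)] at hrk
    omega
  obtain ⟨x, hxmem, hx0⟩ := Submodule.ne_bot_iff _ |>.mp hker
  refine ⟨x, hx0, ?_⟩
  rw [LinearMap.mem_ker, Matrix.mulVecLin_apply, Matrix.mulVec_transpose] at hxmem
  exact hxmem

/-- Lemma (random-matrix rank): for a fixed `a × b` binary matrix `B` of rank `b` and a
uniformly random `a × c` binary matrix `C`, with `0 ≤ b < a < b + c`, the probability that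
the concatenated matrix `A = [B | C]` has rank `< a` is at most `1 / 2 ^ (b + c - a)`. -/
theorem rank_concat_random_matrix (a b c : ℕ) (hba : b < a) (hac : a < b + c)
    (B : Matrix (Fin a) (Fin b) (ZMod 2)) (hB : B.rank = b) :
    ((Finset.univ.filter fun C : Matrix (Fin a) (Fin c) (ZMod 2) =>
        (Matrix.fromCols B C).rank < a).card : ℚ)
      / ((Finset.univ : Finset (Matrix (Fin a) (Fin c) (ZMod 2))).card : ℚ)
      ≤ 1 / 2 ^ (b + c - a) := by
  set Bad := Finset.univ.filter fun C : Matrix (Fin a) (Fin c) (ZMod 2) =>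
    (Matrix.fromCols B C).rank < a with hBad
  set K := Finset.univ.filter fun x : Fin a → ZMod 2 => x ≠ 0 ∧ x ᵥ* B = 0 with hK
  -- Bad ⊆ union of events
  have hsub : Bad ⊆ K.biUnion fun x =>
      Finset.univ.filter fun C : Matrix (Fin a) (Fin c) (ZMod 2) => x ᵥ* C = 0 := by
    intro C hC
    rw [hBad, Finset.mem_filter] at hC
    obtain ⟨x, hx0, hxnull⟩ := exists_left_null _ hC.2
    rw [Matrix.vecMul_fromCols] at hxnull
    have hxB : x ᵥ* B = 0 := by
      funext j; exact congrFun hxnull (Sum.inl j)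
    have hxC : x ᵥ* C = 0 := by
      funext j; exact congrFun hxnull (Sum.inr j)
    exact Finset.mem_biUnion.mpr ⟨x, by simp [hK, hx0, hxB], by simp [hxC]⟩
  -- counting
  have hKcard : K.card ≤ 2 ^ (a - b) := by
    rw [← card_left_ker B hB]
    exact Finset.card_le_card (fun x hx => by
      rw [hK, Finset.mem_filter] at hx
      exact Finset.mem_filter.mpr ⟨Finset.mem_univ _, hx.2.2⟩)
  have hN : Bad.card ≤ 2 ^ (a - b) * (2 ^ (a - 1)) ^ c := by
    calc Bad.card ≤ (K.biUnion fun x =>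
        Finset.univ.filter fun C : Matrix (Fin a) (Fin c) (ZMod 2) => x ᵥ* C = 0).card :=
          Finset.card_le_card hsub
      _ ≤ ∑ x ∈ K, (Finset.univ.filter
          fun C : Matrix (Fin a) (Fin c) (ZMod 2) => x ᵥ* C = 0).card :=
          Finset.card_biUnion_le
      _ = ∑ x ∈ K, (2 ^ (a - 1)) ^ c := by
          refine Finset.sum_congr rfl fun x hx => ?_
          rw [hK, Finset.mem_filter] at hx
          exact card_event x hx.2.1
      _ = K.card * (2 ^ (a - 1)) ^ c := by rw [Finset.sum_const, smul_eq_mul]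
      _ ≤ 2 ^ (a - b) * (2 ^ (a - 1)) ^ c := by
          exact Nat.mul_le_mul_right _ hKcard
  have hD : ((Finset.univ : Finset (Matrix (Fin a) (Fin c) (ZMod 2)))).card = 2 ^ (a * c) := by
    rw [Finset.card_univ]
    have h0 : Fintype.card (Matrix (Fin a) (Fin c) (ZMod 2))
        = Fintype.card (Fin a → Fin c → ZMod 2) := rfl
    rw [h0]
    simp [ZMod.card, ← pow_mul, Nat.mul_comm]
  have hkey : (2 ^ (a - b) * (2 ^ (a - 1)) ^ c) * 2 ^ (b + c - a) = 2 ^ (a * c) := by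
    rw [← pow_mul, ← pow_add, ← pow_add]
    congr 1
    have h1 : a - 1 + 1 = a := by omega
    have : (a - 1) * c + c = a * c := by
      calc (a - 1) * c + c = ((a - 1) + 1) * c := by ring
        _ = a * c := by rw [h1]
    omega
  have hnat : Bad.card * 2 ^ (b + c - a) ≤ 2 ^ (a * c) := by
    rw [← hkey]
    exact Nat.mul_le_mul_right _ hN
  rw [hD]
  rw [div_le_div_iff₀ (by positivity) (by positivity)]
  rw [one_mul]
  exact_mod_cast hnat
end

section
/- Let C ⊆ F_q^n be a linear code with generating matrix H whose rows H_1,…,H_r form an orthonormal basis (H_i · H_j = δ_{ij}). Let u ∈ F_q^n be orthogonal to the Schur square Ĉ of C. Then for any s, t ∈ (F_q^m)^r and any x ∈ (F_q^m)^n with H x^T = s, setting y = x + Σ_{j=1}^r (s_j + t_j) H_j and v = x + u*(x+y) (coordinatewise product, with scalars acting on F_q^m componentwise), we have H v^T = s. -/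
/-- Protocol `P_1`, correctness when Bob asks for `s`. Here `F = F_q` with `q` a power
of 2 (a finite field of characteristic 2). `H` is an `r × n` matrix whose rows
`H_1, …, H_r` form an orthonormal basis of the code `C` they generate, `u ∈ F^n` is
orthogonal to the Schur square `Ĉ` (equivalently, to every product `H_i * H_j`),
`H xᵀ = s`, `y = x + ∑_j (s_j + t_j) H_j` and `v = x + u * (x + y)` (coordinatewise
products, scalars of `F` acting componentwise on `F^m`). Then `H vᵀ = s`. -/
theorem protocol_P1_recovers_s {F : Type*} [Field F] [Fintype F] [CharP F 2]
    {m n r : ℕ} (H : Matrix (Fin r) (Fin n) F)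
    (horth : ∀ i j, ∑ l, H i l * H j l = if i = j then (1 : F) else 0)
    (u : Fin n → F)
    (hu : ∀ i j, ∑ l, u l * (H i l * H j l) = 0)
    (s t : Fin r → (Fin m → F)) (x y v : Fin n → (Fin m → F))
    (hx : ∀ i, ∑ l, H i l • x l = s i)
    (hy : ∀ l, y l = x l + ∑ j, H j l • (s j + t j))
    (hv : ∀ l, v l = x l + u l • (x l + y l)) :
    ∀ i, ∑ l, H i l • v l = s i := by
  intro i
  funext k
  have h2 : ∀ a : F, a + a = 0 := fun a => CharTwo.add_self_eq_zero a
  have hxk : ∑ l, H i l * x l k = s i k := by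
    have := congrFun (hx i) k
    simpa [Finset.sum_apply] using this
  have key : ∀ l, v l k = x l k + u l * ∑ j, H j l * (s j k + t j k) := by
    intro l
    have hvk := congrFun (hv l) k
    have hyk := congrFun (hy l) k
    simp only [Pi.add_apply, Pi.smul_apply, Finset.sum_apply, smul_eq_mul] at hvk hyk
    rw [hvk, hyk, ← add_assoc (x l k) (x l k), h2 (x l k), zero_add]
  calc (∑ l, H i l • v l) k = ∑ l, H i l * v l k := by
        simp [Finset.sum_apply]
    _ = ∑ l, (H i l * x l k + ∑ j, (u l * (H i l * H j l)) * (s j k + t j k)) := by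
        refine Finset.sum_congr rfl fun l _ => ?_
        rw [key l, mul_add]
        simp only [Finset.mul_sum]
        congr 1
        exact Finset.sum_congr rfl fun j _ => by ring
    _ = s i k + ∑ j, (∑ l, u l * (H i l * H j l)) * (s j k + t j k) := by
        rw [Finset.sum_add_distrib, hxk, Finset.sum_comm]
        simp [Finset.sum_mul]
    _ = s i k := by simp [hu]
end

section
/- In the same setting, if instead v' = y + u*(x+y) where u is orthogonal to Ĉ, then H (v')^T = t. -/
/-- Protocol `P_1`, correctness when Bob asks for `t`. Same setting as before
(`F = F_q`, `q` a power of 2): `H` has orthonormal rows `H_1, …, H_r`, `u` is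
orthogonal to the Schur square `Ĉ` of the code generated by the rows, `H xᵀ = s`,
`y = x + ∑_j (s_j + t_j) H_j`, and `v' = y + u * (x + y)` (equivalently
`v' = x + (1 + u) * (x + y)`). Then `H v'ᵀ = t`. -/
theorem protocol_P1_recovers_t {F : Type*} [Field F] [Fintype F] [CharP F 2]
    {m n r : ℕ} (H : Matrix (Fin r) (Fin n) F)
    (horth : ∀ i j, ∑ l, H i l * H j l = if i = j then (1 : F) else 0)
    (u : Fin n → F)
    (hu : ∀ i j, ∑ l, u l * (H i l * H j l) = 0)
    (s t : Fin r → (Fin m → F)) (x y v' : Fin n → (Fin m → F))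
    (hx : ∀ i, ∑ l, H i l • x l = s i)
    (hy : ∀ l, y l = x l + ∑ j, H j l • (s j + t j))
    (hv' : ∀ l, v' l = y l + u l • (x l + y l)) :
    ∀ i, ∑ l, H i l • v' l = t i := by
  intro i
  have hchar : ∀ a : Fin m → F, a + a = 0 := by
    intro a; funext k
    exact CharTwo.add_self_eq_zero (a k)
  have hxy : ∀ l, x l + y l = ∑ j, H j l • (s j + t j) := by
    intro l
    rw [hy, ← add_assoc, hchar, zero_add]
  have hyH : ∀ i, ∑ l, H i l • y l = t i := by
    intro i
    have : ∑ l, H i l • y l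
        = ∑ l, H i l • x l + ∑ j, (∑ l, H i l * H j l) • (s j + t j) := by
      simp only [hy, smul_add, Finset.smul_sum, smul_smul,
        Finset.sum_add_distrib, Finset.sum_smul]
      rw [Finset.sum_comm (γ := Fin n)]
      congr 1
      congr 1
      rw [Finset.sum_comm]
    rw [this, hx]
    have : ∑ j, (∑ l, H i l * H j l) • (s j + t j)
        = ∑ j, (if i = j then (1 : F) else 0) • (s j + t j) := by
      refine Finset.sum_congr rfl fun j _ => by rw [horth]
    rw [this]
    simp only [ite_smul, one_smul, zero_smul, Finset.sum_ite_eq, Finset.mem_univ,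
      if_true]
    rw [← add_assoc, hchar, zero_add]
  have hvanish : ∑ l, H i l • (u l • (x l + y l)) = 0 := by
    have : ∑ l, H i l • (u l • (x l + y l))
        = ∑ j, (∑ l, u l * (H i l * H j l)) • (s j + t j) := by
      simp only [hxy, Finset.smul_sum, smul_smul, Finset.sum_smul]
      rw [Finset.sum_comm]
      refine Finset.sum_congr rfl fun j _ => Finset.sum_congr rfl fun l _ => ?_
      ring_nf
    rw [this]
    simp [hu]
  calc ∑ l, H i l • v' l
      = ∑ l, H i l • y l + ∑ l, H i l • (u l • (x l + y l)) := by
        simp only [hv', smul_add, Finset.sum_add_distrib]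
    _ = t i := by rw [hyH, hvanish, add_zero]
end

section
/- Let q be a power of 2 and suppose Bob, instead of following the protocol, requests coordinates according to an arbitrary u ∈ F_2^n, obtaining v = x + ((s+t)^T H) * u where H is the r×n generating matrix with orthonormal rows. Then H v^T = s + V(s+t) = (I + V)s + V t, where V = H (H*u)^T and H*u denotes H with column ℓ zeroed whenever u_ℓ = 0. -/
/-- Cheating Bob's view in protocol `P_1` (over `F_2`). `H` is the `r × n` generating
matrix with orthonormal rows (`H_i · H_j = δ_{ij}`), `H xᵀ = s`, and Bob requests
coordinates according to an arbitrary `u ∈ F_2^n`, obtaining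
`v = x + ((s + t)ᵀ H) * u` (coordinatewise selection: `v_ℓ = x_ℓ` if `u_ℓ = 0` and
`v_ℓ = y_ℓ` if `u_ℓ = 1`). Let `H * u` denote `H` with column `ℓ` zeroed whenever
`u_ℓ = 0` (entries `u_ℓ H_{iℓ}`), and `V = H (H * u)ᵀ`. Then
`H vᵀ = s + V (s + t)` (which over `F_2` equals `(I + V) s + V t`). -/
theorem cheating_bob_view {m n r : ℕ}
    (H : Matrix (Fin r) (Fin n) (ZMod 2))
    (horth : ∀ i j, ∑ l, H i l * H j l = if i = j then (1 : ZMod 2) else 0)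
    (u : Fin n → ZMod 2)
    (s t : Fin r → (Fin m → ZMod 2)) (x v : Fin n → (Fin m → ZMod 2))
    (hx : ∀ i, ∑ l, H i l • x l = s i)
    (hv : ∀ l, v l = x l + u l • (∑ j, H j l • (s j + t j)))
    (V : Matrix (Fin r) (Fin r) (ZMod 2))
    (hV : V = H * Matrix.transpose (Matrix.of fun i l => u l * H i l)) :
    ∀ i, ∑ l, H i l • v l = s i + ∑ j, V i j • (s j + t j) := by
  intro i
  subst hV
  simp only [hv, smul_add, Finset.sum_add_distrib, hx, Matrix.mul_apply,
    Matrix.transpose_apply, Matrix.of_apply, Finset.smul_sum, smul_smul,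
    Finset.sum_smul]
  have key : ∀ (w : Fin r → Fin m → ZMod 2),
      ∑ l : Fin n, ∑ j : Fin r, (H i l * (u l * H j l)) • w j
        = ∑ j : Fin r, ∑ l : Fin n, (H i l * (u l * H j l)) • w j :=
    fun w => Finset.sum_comm
  rw [key s, key t]
end
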